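/- Let X be the generalized Darboux–Halphen vector field on ℝ³ with components X₁ = x₂x₃ − x₁(x₂ + x₃) − α₁(x₁ − x₂)(x₁ − x₃), X₂ = x₁x₃ − x₂(x₁ + x₃) − α₂(x₂ − x₃)(x₂ − x₁), X₃ = x₁x₂ − x₃(x₁ + x₂) − α₃(x₃ − x₁)(x₃ − x₂), for constants α₁, α₂, α₃ ∈ ℝ. Then, with d₁ = x₂ − x₃, d₂ = x₁ − x₃, d₃ = x₁ − x₂, the polynomials d₁, d₂, d₃ are Darboux polynomials of X with polynomial cofactors depending on the αᵢ; explicitly, X(d₁) = (−2x₁ + α₂d₃ + α₃d₂)·d₁, X(d₂) = (−2x₂ − α₁d₃ + α₃d₁)·d₂, X(d₃) = (−2x₃ − α₁d₂ − α₂d₁)·d₃ identically on ℝ³. -/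

import Mathlib

/-!
The differences `dᵢ` are linear, so their derivative along any field `Z` is the matching difference
`Zᵢ - Zⱼ` of components; each Darboux identity is then a polynomial identity in `x` and the `αᵢ`.
-/

/-- Partial derivative ∂ᵢf at x of a function on ℝⁿ (modeled as `Fin n → ℝ`). -/
noncomputable def pd {n : ℕ} (f : (Fin n → ℝ) → ℝ) (i : Fin n) (x : Fin n → ℝ) : ℝ :=
  fderiv ℝ f x (Pi.single i 1)

/-- Directional derivative Z(f) = Σⱼ Zⱼ ∂ⱼf of f along the vector field Z. -/
noncomputable def lieD {n : ℕ} (Z : Fin n → (Fin n → ℝ) → ℝ) (f : (Fin n → ℝ) → ℝ)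
    (x : Fin n → ℝ) : ℝ :=
  ∑ j, Z j x * pd f j x

/-- The generalized Darboux–Halphen vector field with parameters α₁, α₂, α₃. -/
noncomputable def GDHa (α₁ α₂ α₃ : ℝ) : Fin 3 → (Fin 3 → ℝ) → ℝ :=
  ![fun y => y 1 * y 2 - y 0 * (y 1 + y 2) - α₁ * (y 0 - y 1) * (y 0 - y 2),
    fun y => y 0 * y 2 - y 1 * (y 0 + y 2) - α₂ * (y 1 - y 2) * (y 1 - y 0),
    fun y => y 0 * y 1 - y 2 * (y 0 + y 1) - α₃ * (y 2 - y 0) * (y 2 - y 1)]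

theorem lieD_continuousLinearMap {n : ℕ} (Z : Fin n → (Fin n → ℝ) → ℝ)
    (ℓ : (Fin n → ℝ) →L[ℝ] ℝ) (x : Fin n → ℝ) :
    lieD Z ℓ x = ℓ (fun j => Z j x) := by
  calc lieD Z ℓ x = ∑ j, ℓ (Z j x • Pi.single j 1) := by
        simp only [lieD, pd, ContinuousLinearMap.fderiv, map_smul, smul_eq_mul]
    _ = ℓ (fun j => Z j x) := by
        rw [← map_sum]
        congr 1
        ext k
        simp [Pi.single_apply]

theorem lieD_sub_coord {n : ℕ} (Z : Fin n → (Fin n → ℝ) → ℝ) (i j : Fin n)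
    (x : Fin n → ℝ) :
    lieD Z (fun y => y i - y j) x = Z i x - Z j x :=
  lieD_continuousLinearMap Z (.proj i - .proj j) x

/-- d₁ = x₂ − x₃, d₂ = x₁ − x₃, d₃ = x₁ − x₂ are Darboux polynomials of the
α-generalized Darboux–Halphen field with cofactors −2x₁ + α₂d₃ + α₃d₂,
−2x₂ − α₁d₃ + α₃d₁ and −2x₃ − α₁d₂ − α₂d₁ respectively. -/
theorem generalized_darboux_halphen_alpha_darboux_polynomials
    (α₁ α₂ α₃ : ℝ) (x : Fin 3 → ℝ) :
    lieD (GDHa α₁ α₂ α₃) (fun y => y 1 - y 2) x =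
      (-2 * x 0 + α₂ * (x 0 - x 1) + α₃ * (x 0 - x 2)) * (x 1 - x 2) ∧
    lieD (GDHa α₁ α₂ α₃) (fun y => y 0 - y 2) x =
      (-2 * x 1 - α₁ * (x 0 - x 1) + α₃ * (x 1 - x 2)) * (x 0 - x 2) ∧
    lieD (GDHa α₁ α₂ α₃) (fun y => y 0 - y 1) x =
      (-2 * x 2 - α₁ * (x 0 - x 2) - α₂ * (x 1 - x 2)) * (x 0 - x 1) := by
  simp only [lieD_sub_coord, GDHa, Matrix.cons_val_zero, Matrix.cons_val_one, Matrix.cons_val_two,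
    Matrix.head_cons, Matrix.tail_cons]
  refine ⟨?_, ?_, ?_⟩ <;> ring
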